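/- arXiv:1409.3033 — 3 statements merged into one kernel-verified Lean document; each statement's English description precedes it below -/
import Mathlib

section
/- For a Boolean function f : {0,1}^n → {0,1} with E f = t (expectation under uniform measure), the total influence I(f) = Σ_{k=1}^n I_k(f), where I_k(f) is the probability that flipping coordinate k changes f, satisfies I(f) ≥ 2 t log₂(1/t). -/
open Finset
open scoped Classical

/-- Expectation of a Boolean function under the uniform measure on `{0,1}^n`. -/
noncomputable def Ef (n : ℕ) (f : (Fin n → Bool) → Bool) : ℝ :=
  ((Finset.univ.filter (fun x : Fin n → Bool => f x = true)).card : ℝ) / 2 ^ n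

/-- Influence of coordinate `k`: probability that flipping coordinate `k` changes `f`. -/
noncomputable def coordInf (n : ℕ) (k : Fin n) (f : (Fin n → Bool) → Bool) : ℝ :=
  ((Finset.univ.filter (fun x : Fin n → Bool =>
      f x ≠ f (Function.update x k (!(x k))))).card : ℝ) / 2 ^ n


noncomputable def cntT (n : ℕ) (f : (Fin n → Bool) → Bool) : ℕ :=
  (univ.filter fun x : Fin n → Bool => f x = true).card

noncomputable def cntK (n : ℕ) (k : Fin n) (f : (Fin n → Bool) → Bool) : ℕ :=
  (univ.filter fun x : Fin n → Bool => f x ≠ f (Function.update x k (!(x k)))).card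

lemma sum_cons_split {M : Type*} [AddCommMonoid M] (n : ℕ) (g : (Fin (n+1) → Bool) → M) :
    ∑ x : Fin (n+1) → Bool, g x
      = (∑ y : Fin n → Bool, g (Fin.cons false y)) + ∑ y : Fin n → Bool, g (Fin.cons true y) := by
  rw [← (Fin.consEquiv fun _ : Fin (n+1) => Bool).sum_comp g, Fintype.sum_prod_type,
    Fintype.sum_bool]
  simp only [Fin.consEquiv, Equiv.coe_fn_mk]
  exact add_comm _ _

lemma cntT_split (n : ℕ) (f : (Fin (n+1) → Bool) → Bool) :
    cntT (n+1) f = cntT n (fun y => f (Fin.cons false y)) + cntT n (fun y => f (Fin.cons true y)) := by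
  simp only [cntT, Finset.card_filter]
  exact sum_cons_split n _

lemma cntK_succ (n : ℕ) (k : Fin n) (f : (Fin (n+1) → Bool) → Bool) :
    cntK (n+1) k.succ f
      = cntK n k (fun y => f (Fin.cons false y)) + cntK n k (fun y => f (Fin.cons true y)) := by
  simp only [cntK, Finset.card_filter]
  rw [sum_cons_split n]
  congr 1
  all_goals
    apply Finset.sum_congr rfl
    intro y _
    simp only [Fin.cons_succ, ← Fin.cons_update]

lemma cntK_zero (n : ℕ) (f : (Fin (n+1) → Bool) → Bool) :
    cntK (n+1) 0 f
      = 2 * (univ.filter fun y : Fin n → Bool => f (Fin.cons false y) ≠ f (Fin.cons true y)).card := by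
  simp only [cntK, Finset.card_filter]
  rw [sum_cons_split n]
  have h1 : ∀ (b : Bool) (y : Fin n → Bool),
      Function.update (Fin.cons b y : Fin (n+1) → Bool) 0 (!((Fin.cons b y : Fin (n+1) → Bool) 0)) = Fin.cons (!b) y := by
    intro b y
    rw [Fin.cons_zero, Fin.update_cons_zero]
  have h2 : ∑ y : Fin n → Bool,
      (if f (Fin.cons true y) ≠ f (Function.update (Fin.cons true y : Fin (n+1) → Bool) 0
        (!((Fin.cons true y : Fin (n+1) → Bool) 0))) then 1 else 0)
      = ∑ y : Fin n → Bool, (if f (Fin.cons false y) ≠ f (Fin.cons true y) then 1 else 0) := by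
    apply Finset.sum_congr rfl; intro y _
    rw [h1]
    simp only [Bool.not_true, ne_comm]
  have h3 : ∑ y : Fin n → Bool,
      (if f (Fin.cons false y) ≠ f (Function.update (Fin.cons false y : Fin (n+1) → Bool) 0
        (!((Fin.cons false y : Fin (n+1) → Bool) 0))) then 1 else 0)
      = ∑ y : Fin n → Bool, (if f (Fin.cons false y) ≠ f (Fin.cons true y) then 1 else 0) := by
    apply Finset.sum_congr rfl; intro y _
    rw [h1]
    simp only [Bool.not_false]
  rw [h2, h3]
  ring

lemma cnt_sub_le (n : ℕ) (f : (Fin (n+1) → Bool) → Bool) :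
    cntT n (fun y => f (Fin.cons false y))
      ≤ (univ.filter fun y : Fin n → Bool => f (Fin.cons false y) ≠ f (Fin.cons true y)).card
        + cntT n (fun y => f (Fin.cons true y)) := by
  calc cntT n (fun y => f (Fin.cons false y))
      ≤ ((univ.filter fun y : Fin n → Bool => f (Fin.cons false y) ≠ f (Fin.cons true y))
          ∪ (univ.filter fun y => f (Fin.cons true y) = true)).card := by
        apply Finset.card_le_card
        intro y hy
        simp only [cntT, mem_filter, mem_univ, true_and] at hy
        simp only [mem_union, mem_filter, mem_univ, true_and]
        by_cases h : f (Fin.cons true y) = true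
        · exact Or.inr h
        · exact Or.inl (by rw [hy]; exact fun h2 => h h2.symm)
    _ ≤ _ := Finset.card_union_le _ _

lemma cnt_sub_le' (n : ℕ) (f : (Fin (n+1) → Bool) → Bool) :
    cntT n (fun y => f (Fin.cons true y))
      ≤ (univ.filter fun y : Fin n → Bool => f (Fin.cons false y) ≠ f (Fin.cons true y)).card
        + cntT n (fun y => f (Fin.cons false y)) := by
  calc cntT n (fun y => f (Fin.cons true y))
      ≤ ((univ.filter fun y : Fin n → Bool => f (Fin.cons false y) ≠ f (Fin.cons true y))
          ∪ (univ.filter fun y => f (Fin.cons false y) = true)).card := by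
        apply Finset.card_le_card
        intro y hy
        simp only [cntT, mem_filter, mem_univ, true_and] at hy
        simp only [mem_union, mem_filter, mem_univ, true_and]
        by_cases h : f (Fin.cons false y) = true
        · exact Or.inr h
        · exact Or.inl (by rw [hy]; exact fun h2 => h h2)
    _ ≤ _ := Finset.card_union_le _ _

lemma exp_mul_log_two_le {x : ℝ} (h0 : 0 ≤ x) (h1 : x ≤ 1) :
    Real.exp (x * Real.log 2) ≤ 1 + x := by
  have h := convexOn_exp.2 (Set.mem_univ (0:ℝ)) (Set.mem_univ (Real.log 2))
    (by linarith : (0:ℝ) ≤ 1 - x) h0 (by ring)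
  simp only [smul_eq_mul, mul_zero, zero_add, Real.exp_zero, Real.exp_log two_pos] at h
  calc Real.exp (x * Real.log 2) ≤ (1 - x) * 1 + x * 2 := h
    _ = 1 + x := by ring

lemma key_log {a b : ℝ} (hb : 0 ≤ b) (hba : b ≤ a) :
    2 * b * Real.log 2 ≤ (a + b) * Real.log (a + b) - a * Real.log a - b * Real.log b := by
  rcases eq_or_lt_of_le hb with h | hb
  · simp [← h]
  have ha : 0 < a := lt_of_lt_of_le hb hba
  have hab : 0 < a + b := by linarith
  have e1 : (a + b) * Real.log (a + b) - a * Real.log a - b * Real.log b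
      = a * Real.log ((a+b)/a) + b * Real.log ((a+b)/b) := by
    rw [Real.log_div (ne_of_gt hab) (ne_of_gt ha), Real.log_div (ne_of_gt hab) (ne_of_gt hb)]
    ring
  rw [e1]
  have k1 : b * Real.log 2 ≤ a * Real.log ((a+b)/a) := by
    have hx0 : 0 ≤ b / a := by positivity
    have hx1 : b / a ≤ 1 := (div_le_one ha).2 hba
    have hlog : (b/a) * Real.log 2 ≤ Real.log (1 + b/a) := by
      rw [← Real.exp_le_exp, Real.exp_log (by linarith)]
      exact exp_mul_log_two_le hx0 hx1
    have heq : (a+b)/a = 1 + b/a := by field_simp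
    rw [heq]
    calc b * Real.log 2 = a * ((b/a) * Real.log 2) := by field_simp
      _ ≤ a * Real.log (1 + b/a) := mul_le_mul_of_nonneg_left hlog (le_of_lt ha)
  have k2 : b * Real.log 2 ≤ b * Real.log ((a+b)/b) := by
    apply mul_le_mul_of_nonneg_left _ (le_of_lt hb)
    apply Real.log_le_log two_pos
    rw [le_div_iff₀ hb]; linarith
  linarith

lemma step_aux {c a b : ℝ} (hc : 0 < c) (hb : 0 ≤ b) (hba : b ≤ a) :
    2*(a+b)*Real.log (2*c/(a+b)) ≤ 2*(a-b)*Real.log 2 + 2*a*Real.log (c/a) + 2*b*Real.log (c/b) := by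
  have ha : 0 ≤ a := le_trans hb hba
  rcases eq_or_lt_of_le ha with h0 | ha
  · have : b = 0 := le_antisymm (h0 ▸ hba) hb
    simp [← h0, this]
  rcases eq_or_lt_of_le hb with h0 | hb
  · rw [← h0]
    have h2 : 2*c/(a+0) = 2*(c/a) := by rw [add_zero]; ring
    rw [h2, Real.log_mul two_ne_zero (ne_of_gt (by positivity))]
    simp only [add_zero, sub_zero, mul_zero]
    linarith [(by ring : 2*a*(Real.log 2 + Real.log (c/a)) = 2*a*Real.log 2 + 2*a*Real.log (c/a))]
  have hab : 0 < a + b := by linarith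
  have e0 : Real.log (2*c/(a+b)) = Real.log 2 + Real.log c - Real.log (a+b) := by
    rw [Real.log_div (by positivity) (ne_of_gt hab), Real.log_mul two_ne_zero (ne_of_gt hc)]
  have e1 : Real.log (c/a) = Real.log c - Real.log a := Real.log_div (ne_of_gt hc) (ne_of_gt ha)
  have e2 : Real.log (c/b) = Real.log c - Real.log b := Real.log_div (ne_of_gt hc) (ne_of_gt hb)
  rw [e0, e1, e2]
  nlinarith [key_log (le_of_lt hb) hba]

lemma step_real {c a b : ℝ} (hc : 0 < c) (ha : 0 ≤ a) (hb : 0 ≤ b) :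
    2*(a+b)*Real.log (2*c/(a+b)) ≤ 2 * |a - b| * Real.log 2 + 2*a*Real.log (c/a) + 2*b*Real.log (c/b) := by
  rcases le_total b a with h | h
  · rw [abs_of_nonneg (by linarith)]; exact step_aux hc hb h
  · rw [abs_of_nonpos (by linarith)]
    have h2 := step_aux hc ha h
    rw [add_comm b a] at h2
    linarith

lemma main_bound : ∀ (n : ℕ) (f : (Fin n → Bool) → Bool),
    2 * (cntT n f : ℝ) * Real.log ((2^n : ℝ) / cntT n f)
      ≤ (∑ k : Fin n, (cntK n k f : ℝ)) * Real.log 2 := by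
  intro n
  induction n with
  | zero =>
    intro f
    have h1 : cntT 0 f ≤ 1 :=
      calc cntT 0 f ≤ (univ : Finset (Fin 0 → Bool)).card := Finset.card_filter_le _ _
        _ = 1 := by simp
    rw [Finset.univ_eq_empty (α := Fin 0), Finset.sum_empty, zero_mul]
    interval_cases h : cntT 0 f <;> simp [h]
  | succ n ih =>
    intro f
    set f₀ : (Fin n → Bool) → Bool := fun y => f (Fin.cons false y) with hf₀
    set f₁ : (Fin n → Bool) → Bool := fun y => f (Fin.cons true y) with hf₁
    set a : ℝ := (cntT n f₀ : ℝ) with hadef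
    set b : ℝ := (cntT n f₁ : ℝ) with hbdef
    set D : ℕ := (univ.filter fun y : Fin n → Bool =>
      f (Fin.cons false y) ≠ f (Fin.cons true y)).card with hD
    have ha : 0 ≤ a := by positivity
    have hb : 0 ≤ b := by positivity
    have hlog2 : (0:ℝ) ≤ Real.log 2 := Real.log_nonneg one_le_two
    have habs : |a - b| ≤ (D : ℝ) := by
      rw [abs_sub_le_iff]
      constructor
      · have := cnt_sub_le n f
        have : (cntT n f₀ : ℝ) ≤ (D : ℝ) + (cntT n f₁ : ℝ) := by exact_mod_cast this
        linarith
      · have := cnt_sub_le' n f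
        have : (cntT n f₁ : ℝ) ≤ (D : ℝ) + (cntT n f₀ : ℝ) := by exact_mod_cast this
        linarith
    have hsplit : (cntT (n+1) f : ℝ) = a + b := by
      rw [cntT_split n f]; push_cast; rfl
    have htot : (∑ k : Fin (n+1), (cntK (n+1) k f : ℝ))
        = 2 * (D : ℝ) + (∑ k : Fin n, (cntK n k f₀ : ℝ)) + ∑ k : Fin n, (cntK n k f₁ : ℝ) := by
      rw [Fin.sum_univ_succ]
      rw [cntK_zero n f]
      push_cast
      have hsum : ∑ i : Fin n, (cntK (n+1) i.succ f : ℝ)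
          = ∑ k : Fin n, ((cntK n k f₀ : ℝ) + (cntK n k f₁ : ℝ)) :=
        Finset.sum_congr rfl (fun k _ => by rw [cntK_succ n k f]; push_cast; rfl)
      rw [hsum, Finset.sum_add_distrib, ← hD]
      ring
    have hpow : ((2:ℝ)^(n+1)) = 2 * (2:ℝ)^n := by ring
    calc 2 * (cntT (n+1) f : ℝ) * Real.log ((2^(n+1) : ℝ) / cntT (n+1) f)
        = 2*(a+b)*Real.log (2*(2:ℝ)^n/(a+b)) := by rw [hsplit, hpow]
      _ ≤ 2 * |a - b| * Real.log 2 + 2*a*Real.log ((2:ℝ)^n/a) + 2*b*Real.log ((2:ℝ)^n/b) :=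
          step_real (by positivity) ha hb
      _ ≤ 2*(D:ℝ)*Real.log 2 + (∑ k : Fin n, (cntK n k f₀ : ℝ)) * Real.log 2
            + (∑ k : Fin n, (cntK n k f₁ : ℝ)) * Real.log 2 := by
          have h0 := ih f₀
          have h1 := ih f₁
          have habs2 : 2 * |a - b| * Real.log 2 ≤ 2*(D:ℝ)*Real.log 2 := by
            apply mul_le_mul_of_nonneg_right _ hlog2
            linarith
          linarith
      _ = (∑ k : Fin (n+1), (cntK (n+1) k f : ℝ)) * Real.log 2 := by rw [htot]; ring

/-- Edge-isoperimetric inequality: `I(f) ≥ 2 t log₂(1/t)` where `t = E f`. -/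
theorem total_influence_lower_bound (n : ℕ) (f : (Fin n → Bool) → Bool) (t : ℝ)
    (ht : Ef n f = t) :
    ∑ k : Fin n, coordInf n k f ≥ 2 * t * Real.logb 2 (1 / t) := by
  have hco : ∀ k : Fin n, coordInf n k f = (cntK n k f : ℝ) / 2 ^ n := fun k => rfl
  have hEf : Ef n f = (cntT n f : ℝ) / 2 ^ n := rfl
  have hP : (0:ℝ) < 2 ^ n := by positivity
  have hL : (0:ℝ) < Real.log 2 := Real.log_pos one_lt_two
  have hS : ∑ k : Fin n, coordInf n k f = (∑ k : Fin n, (cntK n k f : ℝ)) / 2 ^ n := by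
    rw [Finset.sum_div]; exact Finset.sum_congr rfl fun k _ => hco k
  rw [ge_iff_le, hS]
  rcases Nat.eq_zero_or_pos (cntT n f) with h0 | hm
  · have ht0 : t = 0 := by rw [← ht, hEf, h0]; simp
    rw [ht0]
    simp only [mul_zero, zero_mul]
    apply div_nonneg _ (le_of_lt hP)
    exact Finset.sum_nonneg fun k _ => Nat.cast_nonneg _
  · have hmR : (0:ℝ) < (cntT n f : ℝ) := by exact_mod_cast hm
    rw [← ht, hEf, one_div_div, Real.logb]
    have e : 2 * ((cntT n f : ℝ) / 2 ^ n) *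
          (Real.log ((2:ℝ) ^ n / (cntT n f : ℝ)) / Real.log 2)
        = (2 * (cntT n f : ℝ) * Real.log ((2:ℝ) ^ n / (cntT n f : ℝ))) / (2 ^ n * Real.log 2) := by
      field_simp
    rw [e, div_le_div_iff₀ (by positivity) hP]
    nlinarith [main_bound n f, hP, hL]
end

section
/- If F ⊆ 2^{[n]} satisfies |F| > Σ_{i=0}^{r-1} C(n,i), then there exists a set Y ⊆ [n] with |Y| = r that is shattered by F, i.e. {S ∩ Y : S ∈ F} = 2^Y. -/
open Finset

/-- The Sauer–Shelah theorem: a family of subsets of `[n]` of size greater than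
`∑_{i<r} C(n,i)` shatters some `r`-element set. -/
theorem sauer_shelah (n r : ℕ) (F : Finset (Finset (Fin n)))
    (h : ∑ i ∈ Finset.range r, n.choose i < F.card) :
    ∃ Y : Finset (Fin n), Y.card = r ∧ ∀ Z ⊆ Y, ∃ S ∈ F, S ∩ Y = Z := by
  -- There is a shattered set of card ≥ r
  by_contra hc
  push_neg at hc
  have hbig : ∀ s ∈ F.shatterer, s.card < r := by
    intro s hs
    by_contra hlt
    push_neg at hlt
    obtain ⟨Y, hYs, hYcard⟩ := Finset.exists_subset_card_eq hlt
    have hsh : F.Shatters Y := (Finset.mem_shatterer.1 hs).mono_right hYs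
    obtain ⟨Z, hZY, hZ⟩ := hc Y hYcard
    obtain ⟨S, hS, hSY⟩ := hsh hZY
    exact hZ S hS (by rw [Finset.inter_comm]; exact hSY)
  have hsub : F.shatterer ⊆ (Finset.range r).biUnion
      (fun i => Finset.powersetCard i (Finset.univ : Finset (Fin n))) := by
    intro s hs
    simp only [Finset.mem_biUnion, Finset.mem_range, Finset.mem_powersetCard]
    exact ⟨s.card, hbig s hs, Finset.subset_univ _, rfl⟩
  have h1 : F.card ≤ F.shatterer.card := Finset.card_le_card_shatterer F
  have h2 : F.shatterer.card ≤ ∑ i ∈ Finset.range r, n.choose i := by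
    calc F.shatterer.card ≤ _ := Finset.card_le_card hsub
      _ ≤ ∑ i ∈ Finset.range r, (Finset.powersetCard i (Finset.univ : Finset (Fin n))).card :=
        Finset.card_biUnion_le
      _ = ∑ i ∈ Finset.range r, n.choose i := by
        simp [Finset.card_powersetCard]
  omega
end

section
/- For any Boolean function f : {0,1}^n → {0,1} with E f = 1/2, there exists a set S ⊆ [n] with |S| = ⌈n/2⌉ such that J_S^+(f) = 1, i.e. every assignment of the variables outside S can be completed to a point where f = 1. -/
open Finset
open scoped Classical

/-- `J_S^+(f)`: the probability, over a uniform point `x`, that some `y`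
agreeing with `x` outside `S` has `f y = 1`. -/
noncomputable def Jplus (n : ℕ) (f : (Fin n → Bool) → Bool) (S : Finset (Fin n)) : ℝ :=
  ((Finset.univ.filter (fun x : Fin n → Bool =>
      ∃ y : Fin n → Bool, (∀ i ∉ S, y i = x i) ∧ f y = true)).card : ℝ) / 2 ^ n

/-- Key counting fact: twice the sum of the first `n/2` binomial coefficients is
less than `2^n`, for `n ≥ 1`. -/
lemma two_mul_sum_choose_lt (n : ℕ) (hn : 1 ≤ n) :
    2 * ∑ i ∈ Finset.range (n / 2), n.choose i < 2 ^ n := by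
  set k := n / 2 with hk
  have hkn : k + k ≤ n := by omega
  -- reflection: ∑_{i < k} C(n, i) = ∑_{i ∈ Ico (n+1-k) (n+1)} C(n, i)
  have hrefl : ∑ i ∈ Finset.range k, n.choose i
      = ∑ i ∈ Finset.Ico (n + 1 - k) (n + 1), n.choose i := by
    refine Finset.sum_nbij' (fun i => n - i) (fun i => n - i) ?_ ?_ ?_ ?_ ?_
    · intro i hi
      simp only [Finset.mem_range] at hi
      simp only [Finset.mem_Ico]
      omega
    · intro i hi
      simp only [Finset.mem_Ico] at hi
      simp only [Finset.mem_range]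
      omega
    · intro i hi
      simp only [Finset.mem_range] at hi
      show n - (n - i) = i
      omega
    · intro i hi
      simp only [Finset.mem_Ico] at hi
      show n - (n - i) = i
      omega
    · intro i hi
      simp only [Finset.mem_range] at hi
      rw [Nat.choose_symm (by omega)]
  have hdisj : Disjoint (Finset.range k) (Finset.Ico (n + 1 - k) (n + 1)) := by
    rw [Finset.disjoint_left]
    intro i hi hi'
    simp only [Finset.mem_range] at hi
    simp only [Finset.mem_Ico] at hi'
    omega
  have hsub : Finset.range k ∪ Finset.Ico (n + 1 - k) (n + 1) ⊆ Finset.range (n + 1) := by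
    intro i hi
    simp only [Finset.mem_union, Finset.mem_range, Finset.mem_Ico] at hi ⊢
    omega
  have hknotin : k ∉ Finset.range k ∪ Finset.Ico (n + 1 - k) (n + 1) := by
    simp only [Finset.mem_union, Finset.mem_range, Finset.mem_Ico]
    omega
  have hle : n.choose k + ((∑ i ∈ Finset.range k, n.choose i)
      + (∑ i ∈ Finset.Ico (n + 1 - k) (n + 1), n.choose i))
      ≤ ∑ i ∈ Finset.range (n + 1), n.choose i := by
    rw [← Finset.sum_union hdisj, ← Finset.sum_insert hknotin]
    · exact Finset.sum_le_sum_of_subset (by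
        intro i hi
        simp only [Finset.mem_insert] at hi
        rcases hi with rfl | hi
        · simp only [Finset.mem_range]; omega
        · exact hsub hi)
  have hpos : 1 ≤ n.choose k := Nat.choose_pos (by omega)
  rw [Nat.sum_range_choose] at hle
  omega

/-- The map from boolean vectors to subsets. -/
noncomputable def bvToSet (n : ℕ) (x : Fin n → Bool) : Finset (Fin n) :=
  Finset.univ.filter (fun i => x i = true)

lemma bvToSet_inj (n : ℕ) : Function.Injective (bvToSet n) := by
  intro x y hxy
  funext i
  have h2 : (i ∈ bvToSet n x) ↔ (i ∈ bvToSet n y) := by rw [hxy]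
  simp only [bvToSet, Finset.mem_filter, Finset.mem_univ, true_and] at h2
  cases hx : x i <;> cases hy : y i <;> simp_all

/-- If `E f = 1/2` then some set `S` of `⌈n/2⌉` coordinates has `J_S^+(f) = 1`. -/
theorem exists_half_set_Jplus_one (n : ℕ) (f : (Fin n → Bool) → Bool)
    (h : Ef n f = 1 / 2) :
    ∃ S : Finset (Fin n), S.card = (n + 1) / 2 ∧ Jplus n f S = 1 := by
  classical
  set A : Finset (Fin n → Bool) := Finset.univ.filter (fun x => f x = true) with hA
  -- card A * 2 = 2 ^ n
  have hcard : (A.card : ℝ) / 2 ^ n = 1 / 2 := h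
  have hpow : (0 : ℝ) < 2 ^ n := by positivity
  have hcard2 : (A.card : ℝ) * 2 = 2 ^ n := by
    field_simp at hcard
    linarith
  have hcardN : A.card * 2 = 2 ^ n := by
    have := hcard2
    have h2 : ((A.card * 2 : ℕ) : ℝ) = ((2 ^ n : ℕ) : ℝ) := by push_cast; linarith
    exact_mod_cast h2
  have hn : 1 ≤ n := by
    by_contra hn
    interval_cases n
    simp at hcardN
  -- the set family
  set 𝒜 : Finset (Finset (Fin n)) := A.image (bvToSet n) with h𝒜
  have hcard𝒜 : 𝒜.card = A.card := Finset.card_image_of_injective _ (bvToSet_inj n)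
  -- there is a shattered set of size n / 2
  have hshat : ∃ T : Finset (Fin n), T.card = n / 2 ∧ 𝒜.Shatters T := by
    by_contra hcon
    push_neg at hcon
    -- every shattered set has size < n / 2
    have hsmall : ∀ s ∈ 𝒜.shatterer, s.card < n / 2 := by
      intro s hs
      by_contra hbig
      push_neg at hbig
      obtain ⟨t, hts, htcard⟩ := Finset.exists_subset_card_eq hbig
      have ht : t ∈ 𝒜.shatterer :=
        (𝒜.isLowerSet_shatterer) hts (Finset.mem_coe.2 hs)
      exact hcon t htcard (Finset.mem_shatterer.1 ht)
    -- so the shatterer is small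
    have hsub : 𝒜.shatterer ⊆ (Finset.range (n / 2)).biUnion
        (fun i => Finset.powersetCard i (Finset.univ : Finset (Fin n))) := by
      intro s hs
      simp only [Finset.mem_biUnion, Finset.mem_range, Finset.mem_powersetCard]
      exact ⟨s.card, hsmall s hs, Finset.subset_univ s, rfl⟩
    have hbound : 𝒜.shatterer.card ≤ ∑ i ∈ Finset.range (n / 2), n.choose i := by
      calc 𝒜.shatterer.card ≤ ((Finset.range (n / 2)).biUnion
          (fun i => Finset.powersetCard i (Finset.univ : Finset (Fin n)))).card :=
            Finset.card_le_card hsub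
        _ ≤ ∑ i ∈ Finset.range (n / 2),
            (Finset.powersetCard i (Finset.univ : Finset (Fin n))).card :=
            Finset.card_biUnion_le
        _ = ∑ i ∈ Finset.range (n / 2), n.choose i := by
            refine Finset.sum_congr rfl fun i _ => ?_
            rw [Finset.card_powersetCard, Finset.card_univ, Fintype.card_fin]
    have hSS := Finset.card_le_card_shatterer 𝒜
    have := two_mul_sum_choose_lt n hn
    omega
  obtain ⟨T, hTcard, hTshat⟩ := hshat
  refine ⟨Tᶜ, ?_, ?_⟩
  · rw [Finset.card_compl, Fintype.card_fin, hTcard]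
    omega
  · -- every x admits a completion
    have hall : Finset.univ.filter (fun x : Fin n → Bool =>
        ∃ y : Fin n → Bool, (∀ i ∉ Tᶜ, y i = x i) ∧ f y = true)
        = (Finset.univ : Finset (Fin n → Bool)) := by
      refine Finset.eq_univ_iff_forall.2 fun x => ?_
      simp only [Finset.mem_filter, Finset.mem_univ, true_and]
      have hsub : T.filter (fun i => x i = true) ⊆ T := Finset.filter_subset _ _
      obtain ⟨u, hu𝒜, huT⟩ := hTshat hsub
      rw [h𝒜, Finset.mem_image] at hu𝒜
      obtain ⟨a, haA, hau⟩ := hu𝒜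
      have hfa : f a = true := (Finset.mem_filter.1 haA).2
      refine ⟨a, fun i hi => ?_, hfa⟩
      rw [Finset.notMem_compl] at hi
      have hiu : i ∈ u ↔ (x i = true) := by
        constructor
        · intro hmem
          have : i ∈ T ∩ u := Finset.mem_inter.2 ⟨hi, hmem⟩
          rw [huT, Finset.mem_filter] at this
          exact this.2
        · intro hx
          have : i ∈ T ∩ u := by rw [huT, Finset.mem_filter]; exact ⟨hi, hx⟩
          exact (Finset.mem_inter.1 this).2
      have hia : i ∈ u ↔ (a i = true) := by
        rw [← hau]
        simp [bvToSet]
      cases hx : x i <;> cases ha : a i <;> simp_all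
    rw [Jplus, hall]
    have : ((Finset.univ : Finset (Fin n → Bool)).card : ℝ) = 2 ^ n := by
      rw [Finset.card_univ]
      simp [Fintype.card_fun]
    rw [this]
    field_simp
end
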